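/- Fix integers c_{jk} (1 ≤ j < k ≤ n) and ℓ_1,…,ℓ_n, and indices 1 ≤ j_0 < j_1 < ⋯ < j_s ≤ n with s ≥ 2. Assume: ℓ_{j_t} = 0 for 0 ≤ t ≤ s−1 and ℓ_{j_s} > 0; c_{j_0 j_1} = 2; c_{j_1 j_2} = −2 and c_{j_0 j_2} = −2; c_{j_t j_{t+1}} = −1 for 2 ≤ t ≤ s−1; c_{j_p j_q} = 0 whenever 1 ≤ p < q ≤ s and q − p ≥ 2, and c_{j_0 j_q} = 0 for 3 ≤ q ≤ s. Define σ ∈ {+,−}^n by σ_p = − if p ∈ {j_0,…,j_s} and σ_p = + otherwise. Then m_{σ,j_s} = ℓ_{j_s}, m_{σ,j_{s−1}} = ⋯ = m_{σ,j_2} = ℓ_{j_s}, m_{σ,j_1} = 2 ℓ_{j_s}, and m_{σ,j_0} = −2 ℓ_{j_s} < 0. (This is the case, in type B, of a minimal hesitant λ-walk crossing the double edge against the arrow.) -/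

import Mathlib

open Finset

/-- `A_j(x) = ℓ_j − Σ_{k>j} c_{jk} x_k` (for the last index the sum is empty). -/
noncomputable def GKA {n : ℕ} (c : Fin n → Fin n → ℤ) (ℓ : Fin n → ℤ)
    (j : Fin n) (x : Fin n → ℝ) : ℝ :=
  (ℓ j : ℝ) - ∑ k ∈ Finset.univ.filter (fun k : Fin n => j < k), (c j k : ℝ) * x k

/-- The Grossberg–Karshon twisted cube `C(c,ℓ)`. -/
noncomputable def GKcube {n : ℕ} (c : Fin n → Fin n → ℤ) (ℓ : Fin n → ℤ) :
    Set (Fin n → ℝ) :=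
  {x | ∀ j : Fin n, (GKA c ℓ j x < x j ∧ x j < 0) ∨ (0 ≤ x j ∧ x j ≤ GKA c ℓ j x)}

/-- `sgn(t) = 1` for `t < 0` and `−1` for `t ≥ 0`. -/
noncomputable def GKsgn (t : ℝ) : ℝ := if t < 0 then 1 else -1

open Classical in
/-- The density function `ρ`: `ρ(x) = (−1)^n ∏_k sgn(x_k)` on `C(c,ℓ)`, `0` elsewhere. -/
noncomputable def GKrho {n : ℕ} (c : Fin n → Fin n → ℤ) (ℓ : Fin n → ℤ)
    (x : Fin n → ℝ) : ℝ :=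
  if x ∈ GKcube c ℓ then (-1 : ℝ) ^ n * ∏ k : Fin n, GKsgn (x k) else 0

/-- `(C(c,ℓ), ρ)` is untwisted: `C(c,ℓ)` is closed, convex, the convex hull of a
finite set, and `ρ ≡ 1` on `C(c,ℓ)`.  "Twisted" is the negation of this. -/
noncomputable def GKUntwisted {n : ℕ} (c : Fin n → Fin n → ℤ) (ℓ : Fin n → ℤ) : Prop :=
  IsClosed (GKcube c ℓ) ∧ Convex ℝ (GKcube c ℓ) ∧
  (∃ S : Finset (Fin n → ℝ), GKcube c ℓ = convexHull ℝ (S : Set (Fin n → ℝ))) ∧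
  (∀ x ∈ GKcube c ℓ, GKrho c ℓ x = 1)

/-- The Cartier data `m_σ`, defined by downward recursion:
`m_{σ,k} = 0` if `σ_k = +` (encoded `false`), and
`m_{σ,k} = ℓ_k − Σ_{s>k} c_{ks} m_{σ,s}` if `σ_k = −` (encoded `true`). -/
def GKm {n : ℕ} (c : Fin n → Fin n → ℤ) (ℓ : Fin n → ℤ) (σ : Fin n → Bool)
    (k : Fin n) : ℤ :=
  if σ k then
    ℓ k - ∑ s ∈ (Finset.univ.filter fun s : Fin n => k < s).attach,
      c k s.1 * GKm c ℓ σ s.1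
  else 0
termination_by n - k.val
decreasing_by
  have h := s.2
  simp only [Finset.mem_filter, Finset.mem_univ, true_and, Fin.lt_def] at h
  omega

/-- `A` is the Cartan matrix of a complex semisimple Lie algebra of rank `r`,
i.e. a generalized Cartan matrix of finite type: diagonal entries `2`,
nonpositive off-diagonal entries, `A_{ab} = 0 ↔ A_{ba} = 0`, and `A` is
symmetrizable by positive rationals `d_a` with `(d_a A_{ab})` symmetric
positive definite. -/
def IsCartanMatrix {r : ℕ} (A : Matrix (Fin r) (Fin r) ℤ) : Prop :=
  (∀ a, A a a = 2) ∧
  (∀ a b, a ≠ b → A a b ≤ 0) ∧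
  (∀ a b, A a b = 0 ↔ A b a = 0) ∧
  (∃ d : Fin r → ℚ, (∀ a, 0 < d a) ∧
    (∀ a b, d a * (A a b : ℚ) = d b * (A b a : ℚ)) ∧
    (∀ x : Fin r → ℚ, x ≠ 0 → 0 < ∑ a, ∑ b, x a * d a * (A a b : ℚ) * x b))

/-- `(w_0, …, w_s)` is a diagram walk followed by the condition that the final
root appears in `λ`: a `λ`-walk.  (Successive entries are distinct and adjacent
in the Dynkin diagram, and `λ_{w_s} > 0`.) -/
def IsLambdaWalkSeq {r : ℕ} (A : Matrix (Fin r) (Fin r) ℤ) (lam : Fin r → ℤ)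
    {s : ℕ} (w : Fin (s + 1) → Fin r) : Prop :=
  (∀ t : Fin s, w t.castSucc ≠ w t.succ ∧ A (w t.castSucc) (w t.succ) < 0) ∧
  0 < lam (w (Fin.last s))

/-- `(w_0, w_1, …, w_s)` is a hesitant `λ`-walk: `s ≥ 1`, `w_0 = w_1`, the
walking component `(w_1, …, w_s)` is a diagram walk, and `λ_{w_s} > 0`. -/
def IsHesitantLambdaWalkSeq {r : ℕ} (A : Matrix (Fin r) (Fin r) ℤ)
    (lam : Fin r → ℤ) {s : ℕ} (w : Fin (s + 1) → Fin r) : Prop :=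
  1 ≤ s ∧ w 0 = w 1 ∧
  (∀ t : Fin s, 1 ≤ t.val →
    (w t.castSucc ≠ w t.succ ∧ A (w t.castSucc) (w t.succ) < 0)) ∧
  0 < lam (w (Fin.last s))

/-- The word `i = (i_1, …, i_n)` is hesitant-`λ`-walk-avoiding: no subword
(subsequence, given by a strictly increasing reindexing `j`) is a hesitant
`λ`-walk. -/
def HesitantLambdaWalkAvoiding {r n : ℕ} (A : Matrix (Fin r) (Fin r) ℤ)
    (lam : Fin r → ℤ) (i : Fin n → Fin r) : Prop :=
  ¬ ∃ (s : ℕ) (j : Fin (s + 1) → Fin n), StrictMono j ∧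
      IsHesitantLambdaWalkSeq A lam (i ∘ j)

/-- Minimality of a hesitant `λ`-walk `(w_0, …, w_s)`: the entries of the
walking component `w_1, …, w_s` are pairwise distinct, and if `s ≥ 2` then
`λ_{w_t} = 0` for `0 ≤ t ≤ s − 1`. -/
def MinimalHLW {r s : ℕ} (lam : Fin r → ℤ) (w : Fin (s + 1) → Fin r) : Prop :=
  (∀ p q : Fin (s + 1), 1 ≤ p.val → 1 ≤ q.val → w p = w q → p = q) ∧
  (2 ≤ s → ∀ t : Fin (s + 1), t.val ≤ s - 1 → lam (w t) = 0)

/-! Since `σ` is `−` exactly on the walk `j`, the recursion for `m_σ` at a walk index only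
sees later walk indices, and the vanishing hypotheses on `c` leave at most two terms. Reading
the recursion down from `j_s`: `m_{j_s} = ℓ_{j_s} =: L`; along the simple chain
`m_{j_t} = m_{j_{t+1}}`, so all of `m_{j_2}, …, m_{j_s}` equal `L`; across the double edge
`m_{j_1} = 2 m_{j_2} = 2L`; and finally `m_{j_0} = -(2 m_{j_1} - 2 m_{j_2}) = -2L`. -/

section CartierData

variable {n : ℕ} (c : Fin n → Fin n → ℤ) (ℓ : Fin n → ℤ) {σ : Fin n → Bool}

theorem GKm_of_false {k : Fin n} (h : σ k = false) : GKm c ℓ σ k = 0 := by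
  rw [GKm, h, if_neg Bool.false_ne_true]

theorem GKm_of_true {k : Fin n} (h : σ k = true) :
    GKm c ℓ σ k = ℓ k - ∑ q ∈ univ.filter (k < ·), c k q * GKm c ℓ σ q := by
  rw [GKm, h, if_pos rfl, sum_attach _ fun q => c k q * GKm c ℓ σ q]

variable {m : ℕ} {j : Fin m → Fin n}

theorem GKm_comp_eq_sub_sum (hj : StrictMono j) (hσ : ∀ p, σ p = true ↔ ∃ t, j t = p)
    (t : Fin m) (S : Finset (Fin m)) (hS : ∀ q ∈ S, t < q)
    (hc : ∀ q, t < q → q ∉ S → c (j t) (j q) = 0) :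
    GKm c ℓ σ (j t) = ℓ (j t) - ∑ q ∈ S, c (j t) (j q) * GKm c ℓ σ (j q) := by
  have hsub : S.image j ⊆ univ.filter (j t < ·) := by
    simp only [subset_iff, mem_image, mem_filter, mem_univ, true_and, forall_exists_index, and_imp]
    rintro _ q hq rfl
    exact hj (hS q hq)
  have hvanish :
      ∀ k ∈ univ.filter (j t < ·), k ∉ S.image j → c (j t) k * GKm c ℓ σ k = 0 := by
    intro k hk hkS
    by_cases hσk : σ k = true
    · obtain ⟨q, rfl⟩ := (hσ k).1 hσk
      have htq : t < q := hj.lt_iff_lt.mp (mem_filter.mp hk).2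
      rw [hc q htq fun hq => hkS (mem_image_of_mem j hq), zero_mul]
    · rw [GKm_of_false c ℓ (Bool.eq_false_iff.mpr hσk), mul_zero]
  rw [GKm_of_true c ℓ ((hσ (j t)).2 ⟨t, rfl⟩), ← sum_subset hsub hvanish,
    sum_image fun _ _ _ _ h => hj.injective h]

theorem GKm_comp_eq_sub_mul (hj : StrictMono j) (hσ : ∀ p, σ p = true ↔ ∃ t, j t = p)
    {t u : Fin m} (htu : t < u) (hc : ∀ q, t < q → q ≠ u → c (j t) (j q) = 0) :
    GKm c ℓ σ (j t) = ℓ (j t) - c (j t) (j u) * GKm c ℓ σ (j u) := by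
  simpa using GKm_comp_eq_sub_sum c ℓ hj hσ t {u} (by simpa) (by simpa using hc)

end CartierData

/-- Type-`B` computation (crossing the double edge against
the arrow): for indices `j_0 < ⋯ < j_s` (`s ≥ 2`) with `ℓ_{j_t} = 0` for
`t ≤ s−1`, `ℓ_{j_s} > 0`, `c_{j_0 j_1} = 2`, `c_{j_1 j_2} = c_{j_0 j_2} = −2`,
`c_{j_t j_{t+1}} = −1` for `2 ≤ t ≤ s−1`, the remaining `c`'s among the `j`'s
zero, and `σ` equal to `−` exactly on `{j_0, …, j_s}`:
`m_{σ,j_s} = ℓ_{j_s}`, `m_{σ,j_{s−1}} = ⋯ = m_{σ,j_2} = ℓ_{j_s}`,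
`m_{σ,j_1} = 2ℓ_{j_s}`, and `m_{σ,j_0} = −2ℓ_{j_s} < 0`. -/
theorem statement14 {n : ℕ} (c : Fin n → Fin n → ℤ) (ℓ : Fin n → ℤ)
    (s : ℕ) (hs : 2 ≤ s) (j : Fin (s + 1) → Fin n) (hj : StrictMono j)
    (hl0 : ∀ t : Fin (s + 1), t.val ≤ s - 1 → ℓ (j t) = 0)
    (hls : 0 < ℓ (j (Fin.last s)))
    (hc01 : c (j 0) (j ⟨1, by omega⟩) = 2)
    (hc12 : c (j ⟨1, by omega⟩) (j ⟨2, by omega⟩) = -2)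
    (hc02 : c (j 0) (j ⟨2, by omega⟩) = -2)
    (hchain : ∀ t : Fin s, 2 ≤ t.val → c (j t.castSucc) (j t.succ) = -1)
    (hzero : ∀ p q : Fin (s + 1), 1 ≤ p.val → p.val + 2 ≤ q.val →
      c (j p) (j q) = 0)
    (hzero0 : ∀ q : Fin (s + 1), 3 ≤ q.val → c (j 0) (j q) = 0)
    (σ : Fin n → Bool) (hσ : ∀ p, σ p = true ↔ ∃ t, j t = p) :
    GKm c ℓ σ (j (Fin.last s)) = ℓ (j (Fin.last s)) ∧
    (∀ t : Fin (s + 1), 2 ≤ t.val → t.val ≤ s - 1 →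
      GKm c ℓ σ (j t) = ℓ (j (Fin.last s))) ∧
    GKm c ℓ σ (j ⟨1, by omega⟩) = 2 * ℓ (j (Fin.last s)) ∧
    GKm c ℓ σ (j 0) = -2 * ℓ (j (Fin.last s)) ∧
    GKm c ℓ σ (j 0) < 0 := by
  set L := ℓ (j (Fin.last s))
  let i1 : Fin (s + 1) := ⟨1, by omega⟩
  let i2 : Fin (s + 1) := ⟨2, by omega⟩
  have hlast : GKm c ℓ σ (j (Fin.last s)) = L := by
    simpa using GKm_comp_eq_sub_sum c ℓ hj hσ (Fin.last s) ∅ (by simp)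
      fun q hq => absurd hq (not_lt.mpr (Fin.le_last q))
  have hfrom2 : ∀ t : Fin (s + 1), 2 ≤ t.val → GKm c ℓ σ (j t) = L := by
    refine Fin.reverseInduction (motive := fun t => 2 ≤ t.val → GKm c ℓ σ (j t) = L)
      (fun _ => hlast) fun i ih hi => ?_
    have hi2 : 2 ≤ i.val := hi
    rw [GKm_comp_eq_sub_mul c ℓ hj hσ (Fin.castSucc_lt_succ (i := i)) fun q hq hne => ?_,
      hl0 _ (by simp; omega), hchain i hi2, ih (by simp; omega)]
    · ring
    rw [Ne, Fin.ext_iff, Fin.val_succ] at hne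
    rw [Fin.lt_def, Fin.val_castSucc] at hq
    exact hzero _ _ (by simp; omega) (by simp; omega)
  have h1 : GKm c ℓ σ (j i1) = 2 * L := by
    rw [GKm_comp_eq_sub_mul c ℓ hj hσ (show i1 < i2 by simp [i1, i2, Fin.lt_def])
        fun q hq hne => ?_, hl0 i1 (by simp [i1]; omega), hc12, hfrom2 i2 le_rfl]
    · ring
    rw [Ne, Fin.ext_iff] at hne
    rw [Fin.lt_def] at hq
    exact hzero i1 q le_rfl (by simp [i1, i2] at *; omega)
  have h0 : GKm c ℓ σ (j 0) = -2 * L := by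
    have hpos : ∀ q ∈ ({i1, i2} : Finset (Fin (s + 1))), 0 < q := fun q hq =>
      Fin.pos_iff_ne_zero.mpr fun h => by simp [h, i1, i2, Fin.ext_iff] at hq
    rw [GKm_comp_eq_sub_sum c ℓ hj hσ 0 {i1, i2} hpos fun q hq hne => ?_, hl0 0 (by simp),
      sum_pair (by simp [i1, i2, Fin.ext_iff]), hc01, hc02, h1, hfrom2 i2 le_rfl]
    · ring
    simp only [mem_insert, mem_singleton, Fin.ext_iff, not_or] at hne
    rw [Fin.lt_def] at hq
    exact hzero0 q (by simp [i1, i2] at *; omega)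
  exact ⟨hlast, fun t ht _ => hfrom2 t ht, h1, h0, by rw [h0]; linarith⟩
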